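/- For the FI-module shift functor Σ and each i ≥ 0, there is an isomorphism of FI-modules Σ(M(i)) ≅ M(i) ⊕ M(i−1)^{⊕ i}, where M(i) denotes the k-linearization of the representable functor FI(i,−). -/

import Mathlib

open CategoryTheory CategoryTheory.Limits

def FI : Type := ℕ
def FI.of : ℕ → FI := id
def FI.n : FI → ℕ := id
instance : Category FI where
  Hom m n := Fin m.n ↪ Fin n.n
  id _ := Function.Embedding.refl _
  comp f g := f.trans g
  id_comp _ := rfl
  comp_id _ := rfl
  assoc _ _ _ := rfl
abbrev FIMod (k : Type) [CommRing k] := FI ⥤ ModuleCat.{0} k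

/-- Extension of an injection `[m] → [n]` to `[m+1] → [n+1]` fixing the new first point. -/
def extEmb {m n : ℕ} (f : Fin m ↪ Fin n) : Fin (m + 1) ↪ Fin (n + 1) :=
  ⟨fun x => Fin.cases 0 (fun r => (f r).succ) x, by
    intro a b h
    induction a using Fin.cases with
    | zero =>
      induction b using Fin.cases with
      | zero => rfl
      | succ j => simp at h; exact absurd h.symm (Fin.succ_ne_zero _)
    | succ i =>
      induction b using Fin.cases with
      | zero => simp at h
      | succ j =>
        simp only [Fin.cases_succ] at h
        exact congrArg Fin.succ (f.injective (Fin.succ_injective _ h))⟩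

@[simp] lemma extEmb_zero {m n : ℕ} (f : Fin m ↪ Fin n) : extEmb f 0 = 0 := rfl
@[simp] lemma extEmb_succ {m n : ℕ} (f : Fin m ↪ Fin n) (r : Fin m) :
    extEmb f r.succ = (f r).succ := by
  show @Fin.cases m (fun _ => Fin (n + 1)) 0 (fun r => (f r).succ) r.succ = _
  rw [Fin.cases_succ]

/-- Extensionality for morphisms in `FI`. -/
lemma FI.hom_ext {m n : FI} {f g : Fin m.n ↪ Fin n.n} (h : ∀ x, f x = g x) :
    f = g := DFunLike.ext f g h

/-- The self-embedding `ι : FI → FI`, `[n] ↦ [n+1]`. -/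
def iota : FI ⥤ FI where
  obj n := FI.of (n.n + 1)
  map f := extEmb f
  map_id n := by
    refine FI.hom_ext fun x => ?_
    induction x using Fin.cases <;> rfl
  map_comp {a b c} f g := by
    refine FI.hom_ext fun x => ?_
    induction x using Fin.cases with
    | zero => rfl
    | succ i =>
      show extEmb (f.trans g) i.succ = extEmb g (extEmb f i.succ)
      simp

variable (k : Type) [CommRing k]

/-- The shift functor `Σ` on `FI`-modules. -/
def shiftF : FIMod k ⥤ FIMod k := (Functor.whiskeringLeft FI FI (ModuleCat k)).obj iota

/-- The natural transformation `Id → ι` given by the inclusions `[n] ↪ [n+1]`, `r ↦ r+1`. -/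
def piTrans : 𝟭 FI ⟶ iota where
  app n := ⟨Fin.succ, Fin.succ_injective _⟩
  naturality m n f := by
    refine FI.hom_ext fun x => ?_
    exact (extEmb_succ f x).symm

/-- The natural map `V → ΣV`. -/
def toShift (V : FIMod k) : V ⟶ (shiftF k).obj V :=
  V.leftUnitor.inv ≫ Functor.whiskerRight piTrans V

/-- `V → ΣV` as a natural transformation of endofunctors. -/
def natToShift : 𝟭 (FIMod k) ⟶ shiftF k where
  app V := toShift k V
  naturality V W φ := by
    ext n
    simp only [Functor.id_obj, Functor.id_map, toShift, shiftF, Functor.whiskeringLeft_obj_obj,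
      Functor.comp_obj, Category.assoc, NatTrans.comp_app, Functor.leftUnitor_inv_app,
      Functor.whiskerRight_app, Functor.whiskeringLeft_obj_map, Functor.whiskerLeft_app,
      Category.id_comp]
    exact LinearMap.congr_fun (congrArg ModuleCat.Hom.hom (φ.naturality (piTrans.app n)).symm) _

/-- The derivative `DV`, the cokernel of `V → ΣV`. -/
noncomputable def Dobj (V : FIMod k) : FIMod k := cokernel (toShift k V)

/-- The derivative functor `D`. -/
noncomputable def Dfun : FIMod k ⥤ FIMod k where
  obj V := Dobj k V
  map {V W} φ := cokernel.map _ _ φ ((shiftF k).map φ) ((natToShift k).naturality φ).symm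
  map_id V := by
    apply coequalizer.hom_ext
    simp [Dobj]
  map_comp {U V W} φ ψ := by
    apply coequalizer.hom_ext
    simp [Dobj]

variable (k : Type) [CommRing k]

/-- An `FI`-submodule of an `FI`-module. -/
structure FISub {k : Type} [CommRing k] (V : FIMod k) where
  sub : ∀ n : FI, Submodule k (V.obj n)
  map_mem : ∀ {m n : FI} (f : m ⟶ n) (v : V.obj m), v ∈ sub m → (V.map f) v ∈ sub n

/-- `V` is generated in degrees `≤ N`. -/
def GeneratedIn {k : Type} [CommRing k] (V : FIMod k) (N : ℕ) : Prop :=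
  ∀ W : FISub V, (∀ i : ℕ, i ≤ N → ∀ v : V.obj (FI.of i), v ∈ W.sub (FI.of i)) →
    ∀ (n : FI) (v : V.obj n), v ∈ W.sub n

/-- `V` is a finitely generated `FI`-module. -/
def FG {k : Type} [CommRing k] (V : FIMod k) : Prop :=
  ∃ S : Finset ((n : ℕ) × V.obj (FI.of n)),
    ∀ W : FISub V, (∀ s ∈ S, s.2 ∈ W.sub (FI.of s.1)) → ∀ (n : FI) (v : V.obj n), v ∈ W.sub n

/-- `V` is torsionless: no nonzero element is killed by an injection. -/
def Torsionless {k : Type} [CommRing k] (V : FIMod k) : Prop :=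
  ∀ (i : ℕ) (v : V.obj (FI.of i)), v ≠ 0 →
    ∀ α : FI.of i ⟶ FI.of (i + 1), (V.map α) v ≠ 0


instance (k : Type) [CommRing k] : HasFiniteBiproducts (FIMod k) :=
  Abelian.hasFiniteBiproducts

variable (k : Type) [CommRing k]

/-- The free (representable) `FI`-module `M(i)`, the linearization of `FI(i,−)`. -/
noncomputable def Mrep (i : ℕ) : FIMod k where
  obj n := ModuleCat.of k ((Fin i ↪ Fin n.n) →₀ k)
  map {m n} f := ModuleCat.ofHom (Finsupp.lmapDomain k k fun (e : Fin i ↪ Fin m.n) => e.trans f)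
  map_id n := by
    have : (fun e : Fin i ↪ Fin n.n => e.trans (𝟙 n)) = id := by
      funext e; ext x; rfl
    show ModuleCat.ofHom (Finsupp.lmapDomain k k _) = _
    rw [this, Finsupp.lmapDomain_id]
    rfl
  map_comp {a b c} f g := by
    show ModuleCat.ofHom (Finsupp.lmapDomain k k _) = _
    have : (fun e : Fin i ↪ Fin a.n => e.trans (f ≫ g))
        = (fun e : Fin i ↪ Fin b.n => e.trans g) ∘ (fun e => e.trans f) := by
      funext e; ext x; rfl
    rw [this, Finsupp.lmapDomain_comp]
    rfl

lemma FI.le_of_hom {m n : FI} (f : m ⟶ n) : m.n ≤ n.n := by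
  simpa using Fintype.card_le_of_embedding (f : Fin m.n ↪ Fin n.n)

/-- The submodule `(JV)_n ⊆ V_n` spanned by images from strictly lower degrees. -/
def Jsub {k : Type} [CommRing k] (V : FIMod k) (n : FI) : Submodule k (V.obj n) :=
  ⨆ (m : FI) (_ : m.n < n.n) (f : m ⟶ n), LinearMap.range (V.map f).hom

lemma Jsub_le_comap {k : Type} [CommRing k] (V : FIMod k) {m n : FI} (f : m ⟶ n) :
    Jsub V m ≤ (Jsub V n).comap (V.map f).hom := by
  refine iSup_le fun m' => iSup_le fun hm' => iSup_le fun g => ?_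
  rintro x ⟨y, rfl⟩
  simp only [Submodule.mem_comap]
  have h1 : (V.map f).hom ((V.map g).hom y) = (V.map (g ≫ f)).hom y := by
    rw [V.map_comp]; rfl
  rw [h1]
  have h2 : m'.n < n.n := lt_of_lt_of_le hm' (FI.le_of_hom f)
  refine Submodule.mem_iSup_of_mem m' ?_
  refine Submodule.mem_iSup_of_mem h2 ?_
  exact Submodule.mem_iSup_of_mem (g ≫ f) ⟨y, rfl⟩

/-- The degreewise quotient `H₀(V) = V/JV` as an `FI`-module. -/
noncomputable def H0obj {k : Type} [CommRing k] (V : FIMod k) : FIMod k where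
  obj n := ModuleCat.of k (V.obj n ⧸ Jsub V n)
  map {m n} f := ModuleCat.ofHom (Submodule.mapQ _ _ (V.map f).hom (Jsub_le_comap V f))
  map_id n := by
    have h : V.map (𝟙 n) = 𝟙 (V.obj n) := V.map_id n
    apply ModuleCat.hom_ext
    refine Submodule.linearMap_qext _ ?_
    ext x
    show Submodule.Quotient.mk ((V.map (𝟙 n)).hom x) = _
    rw [h]
    rfl
  map_comp {a b c} f g := by
    have h : V.map (f ≫ g) = V.map f ≫ V.map g := V.map_comp f g
    apply ModuleCat.hom_ext
    refine Submodule.linearMap_qext _ ?_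
    ext x
    show Submodule.Quotient.mk ((V.map (f ≫ g)).hom x) = _
    rw [h]
    rfl

/-- The functor `H₀ = ℂ̃₀ ⊗_{ℂ̃} − : FI-Mod → FI-Mod`. -/
noncomputable def H0Functor (k : Type) [CommRing k] : FIMod k ⥤ FIMod k where
  obj := H0obj
  map {V W} φ :=
    { app := fun n => ModuleCat.ofHom (Submodule.mapQ _ _ (φ.app n).hom (by
        refine iSup_le fun m => iSup_le fun hm => iSup_le fun g => ?_
        rintro x ⟨y, rfl⟩
        simp only [Submodule.mem_comap]
        have h1 : (φ.app n).hom ((V.map g).hom y) = (W.map g).hom ((φ.app m).hom y) :=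
          LinearMap.congr_fun (congrArg ModuleCat.Hom.hom (φ.naturality g)) y
        rw [h1]
        refine Submodule.mem_iSup_of_mem m (Submodule.mem_iSup_of_mem hm ?_)
        exact Submodule.mem_iSup_of_mem g ⟨_, rfl⟩)),
      naturality := by
        intro m n f
        apply ModuleCat.hom_ext
        refine Submodule.linearMap_qext _ ?_
        ext x
        have h : (φ.app n).hom ((V.map f).hom x) = (W.map f).hom ((φ.app m).hom x) :=
          LinearMap.congr_fun (congrArg ModuleCat.Hom.hom (φ.naturality f)) x
        show Submodule.Quotient.mk ((φ.app n).hom ((V.map f).hom x)) = _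
        rw [h]
        rfl }
  map_id V := by
    ext n : 2
    apply ModuleCat.hom_ext
    refine Submodule.linearMap_qext _ ?_
    ext x
    rfl
  map_comp {U V W} φ ψ := by
    ext n : 2
    apply ModuleCat.hom_ext
    refine Submodule.linearMap_qext _ ?_
    ext x
    rfl

instance (k : Type) [CommRing k] : (H0Functor k).Additive where
  map_add := by
    intro V W φ ψ
    ext n : 2
    apply ModuleCat.hom_ext
    refine Submodule.linearMap_qext _ ?_
    ext x
    show Submodule.Quotient.mk ((φ.app n).hom x + (ψ.app n).hom x) =
      (((H0Functor k).map φ).app n).hom (Submodule.Quotient.mk x) +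
      (((H0Functor k).map ψ).app n).hom (Submodule.Quotient.mk x)
    rw [Submodule.Quotient.mk_add]
    rfl

/-- The homology functor `H_s(−) = Tor_s^{ℂ̃}(ℂ̃₀, −)`, as the `s`-th left derived
functor of `H₀`. -/
noncomputable def Hs (k : Type) [CommRing k] [EnoughProjectives (FIMod k)] (s : ℕ) :
    FIMod k ⥤ FIMod k :=
  (H0Functor k).leftDerived s

/-- Strictly monotone injections `[i] → [n]`, a set of representatives for the orbits of
the right action of `S_i` on `FI(i,n)`. -/
def OrdInj (i n : ℕ) : Type := {e : Fin i ↪ Fin n // StrictMono e}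

noncomputable instance (i n : ℕ) : Fintype (OrdInj i n) := by
  classical
  unfold OrdInj
  infer_instance

/-- The canonical map `⊕_{e ∈ OrdInj(i,n)} V_i → V_n`, `(v_e) ↦ Σ_e e·v_e`.
It is bijective for every `n` exactly when `V` is the induced module
`ℂ̃ ⊗_{k[S_i]} V_i`. -/
noncomputable def basicMap {k : Type} [CommRing k] (V : FIMod k) (i n : ℕ) :
    (OrdInj i n → V.obj (FI.of i)) →ₗ[k] V.obj (FI.of n) :=
  ∑ e : OrdInj i n, (V.map (e.1 : FI.of i ⟶ FI.of n)).hom.comp (LinearMap.proj e)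

/-- `V` is (isomorphic to) a basic `♯`-filtered module `ℂ̃ ⊗_{k[S_i]} T` with `T = V_i`. -/
def BasicSharp {k : Type} [CommRing k] (V : FIMod k) (i : ℕ) : Prop :=
  (∀ j : ℕ, j < i → Subsingleton (V.obj (FI.of j))) ∧
    ∀ n : ℕ, Function.Bijective (basicMap V i n)

/-- `V` admits a filtration of length `m` whose successive quotients are basic
`♯`-filtered modules. -/
def SharpChain {k : Type} [CommRing k] : ℕ → FIMod k → Prop
  | 0, V => IsZero V
  | m + 1, V => ∃ (U W : FIMod k) (f : U ⟶ V) (g : V ⟶ W) (w : f ≫ g = 0),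
      (ShortComplex.mk f g w).ShortExact ∧ SharpChain m U ∧ ∃ i, BasicSharp W i

/-- `V` is a `♯`-filtered `FI`-module. -/
def SharpFiltered {k : Type} [CommRing k] (V : FIMod k) : Prop :=
  ∃ m, SharpChain m V

/-- `pdLE n M` : `M` has projective dimension `≤ n`. -/
noncomputable def pdLE {C : Type*} [Category C] [Abelian C] : ℕ → C → Prop
  | 0, M => Projective M
  | n + 1, M => ∃ (P : C) (f : P ⟶ M), Projective P ∧ Epi f ∧ pdLE n (kernel f)

/-- The `d`-th iterated shift `Σ_d V`. -/
def shiftIter (k : Type) [CommRing k] : ℕ → FIMod k → FIMod k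
  | 0, V => V
  | d + 1, V => (shiftF k).obj (shiftIter k d V)

/-- A permutation of `[i]` as a morphism in `FI`. -/
def permHom (i : ℕ) (g : Equiv.Perm (Fin i)) : FI.of i ⟶ FI.of i := g.toEmbedding

/-- The representation of the symmetric group `S_i` on `V_i` coming from the
`FI`-module structure. -/
def permRep {k : Type} [CommRing k] (V : FIMod k) (i : ℕ) :
    Representation k (Equiv.Perm (Fin i)) (V.obj (FI.of i)) where
  toFun g := (V.map (permHom i g)).hom
  map_one' := by
    have h1 : permHom i 1 = 𝟙 (FI.of i) := rfl
    show (V.map (permHom i 1)).hom = (1 : Module.End k (V.obj (FI.of i)))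
    rw [h1, V.map_id]; rfl
  map_mul' g h := by
    have h1 : permHom i (g * h) = permHom i h ≫ permHom i g := rfl
    show (V.map (permHom i (g * h))).hom = (V.map (permHom i h) ≫ V.map (permHom i g)).hom
    rw [h1, V.map_comp]


/-! An injection `[i] ↪ [n + 1]` either misses the new point `0`, and is then an injection
`[i] ↪ [n]`, or sends exactly one `r ∈ [i]` to `0`, and is then an injection
`[i] ∖ {r} ↪ [n]`. This splits `FI(i, ι -)` naturally as `FI(i, -) ⊔ [i] × FI(i - 1, -)`.
Linearizing, the inclusions of the pieces and the restrictions of coefficients to them are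
natural maps satisfying the biproduct identities, so `Σ M(i) ≅ M(i) ⊕ M(i - 1)^{⊕ i}`. -/

namespace CategoryTheory.Limits

variable {C : Type*} [Category C] [Preadditive C] [HasFiniteBiproducts C]
  [HasBinaryBiproducts C] {ι : Type} [Fintype ι] [DecidableEq ι] {X A B : C}

noncomputable def biprodBiproductIsoOfTotal (p : X ⟶ A) (s : A ⟶ X) (q : ι → (X ⟶ B))
    (t : ι → (B ⟶ X)) (hsp : s ≫ p = 𝟙 A) (hsq : ∀ r, s ≫ q r = 0) (htp : ∀ r, t r ≫ p = 0)
    (htq : ∀ r r', t r ≫ q r' = if r = r' then 𝟙 B else 0)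
    (total : p ≫ s + ∑ r, q r ≫ t r = 𝟙 X) :
    X ≅ A ⊞ ⨁ fun _ : ι => B :=
  biprod.uniqueUpToIso _ _ (b := {
      pt := X
      fst := p
      snd := biproduct.lift q
      inl := s
      inr := biproduct.desc t
      inl_fst := hsp
      inl_snd := biproduct.hom_ext _ _ fun r => by simp [hsq]
      inr_fst := biproduct.hom_ext' _ _ fun r => by simp [htp]
      inr_snd := biproduct.hom_ext _ _ fun r' => biproduct.hom_ext' _ _ fun r => by
        by_cases h : r = r' <;> simp [htq, h] })
    (isBinaryBilimitOfTotal _ (by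
      change p ≫ s + biproduct.lift q ≫ biproduct.desc t = 𝟙 X
      rw [biproduct.lift_desc, total]))

end CategoryTheory.Limits

namespace Function.Bijective

variable {α β γ ι : Type*} {f : α → γ} {g : ι × β → γ}

lemma sumElim_injective_left (h : Bijective (Sum.elim f g)) : Injective f :=
  h.1.comp Sum.inl_injective

lemma sumElim_injective_right (h : Bijective (Sum.elim f g)) (r : ι) :
    Injective fun b => g (r, b) :=
  h.1.comp (Sum.inr_injective.comp (Prod.mk_right_injective r))

lemma sumElim_right_ne_left (h : Bijective (Sum.elim f g)) (r : ι) (b : β) (a : α) :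
    g (r, b) ≠ f a :=
  fun hba => Sum.inr_ne_inl (h.1 (a₁ := .inr (r, b)) (a₂ := .inl a) hba)

lemma sumElim_right_ne_right (h : Bijective (Sum.elim f g)) {r r' : ι} (hr : r ≠ r')
    (b b' : β) : g (r, b) ≠ g (r', b') :=
  fun hbb => hr (Prod.mk.inj
    (Sum.inr_injective (h.1 (a₁ := .inr (r, b)) (a₂ := .inr (r', b')) hbb))).1

lemma sumElim_of_isEmpty [IsEmpty ι] (hf : Bijective f) (g : ι × β → γ) :
    Bijective (Sum.elim f g) := by
  convert hf.comp (Equiv.sumEmpty α (ι × β)).bijective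
  ext (a | ⟨r, _⟩)
  · rfl
  · exact isEmptyElim r

end Function.Bijective

namespace Finsupp

variable {R α β γ M : Type*} [Semiring R] [AddCommMonoid M] [Module R M] {f : α → γ}

lemma lcomapDomain_single (hf : Function.Injective f) (a : α) (m : M) :
    lcomapDomain (R := R) f hf (single (f a) m) = single a m := by
  simp

lemma lcomapDomain_single_of_notMem_range (hf : Function.Injective f) {c : γ}
    (hc : c ∉ Set.range f) (m : M) : lcomapDomain (R := R) f hf (single c m) = 0 := by
  ext a
  simp [show c ≠ f a from fun h => hc ⟨a, h.symm⟩]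

lemma lmapDomain_comp_lcomapDomain_add_sum {ι : Type*} [Fintype ι] {g : ι × β → γ}
    (h : Function.Bijective (Sum.elim f g)) :
    lmapDomain M R f ∘ₗ lcomapDomain f h.sumElim_injective_left +
      ∑ r, lmapDomain M R (fun b => g (r, b)) ∘ₗ
        lcomapDomain (fun b => g (r, b)) (h.sumElim_injective_right r) = LinearMap.id := by
  refine lhom_ext fun c m => ?_
  simp only [LinearMap.add_apply, LinearMap.sum_apply, LinearMap.comp_apply, LinearMap.id_apply]
  obtain ⟨a | ⟨r₀, b⟩, rfl⟩ := h.2 c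
  · have hne (r : ι) : f a ∉ Set.range fun b => g (r, b) :=
      fun ⟨b, hb⟩ => h.sumElim_right_ne_left r b a hb
    rw [Sum.elim_inl, lcomapDomain_single, lmapDomain_apply, mapDomain_single,
      Finset.sum_eq_zero fun r _ => by
        rw [lcomapDomain_single_of_notMem_range _ (hne r), map_zero], add_zero]
  · have hne : g (r₀, b) ∉ Set.range f := fun ⟨a, ha⟩ => h.sumElim_right_ne_left r₀ b a ha.symm
    have hne' (r : ι) (hr : r ≠ r₀) : g (r₀, b) ∉ Set.range fun b => g (r, b) :=
      fun ⟨b', hb'⟩ => h.sumElim_right_ne_right hr b' b hb'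
    rw [Sum.elim_inr, lcomapDomain_single_of_notMem_range _ hne, map_zero, zero_add,
      Finset.sum_eq_single r₀ (fun r _ hr => by
        rw [lcomapDomain_single_of_notMem_range _ (hne' r hr), map_zero]) (by simp),
      lcomapDomain_single, lmapDomain_apply, mapDomain_single]

end Finsupp

namespace CategoryTheory

universe u

variable {C : Type*} [Category C] {R : Type u} [Ring R] {P P' Q : C ⥤ Type u}

section FreeComap

variable (τ : P ⟶ Q) (hinj : ∀ X, Function.Injective (τ.app X))
  (hcart : ∀ ⦃X Y : C⦄ (f : X ⟶ Y) (q : Q.obj X), Q.map f q ∈ Set.range (τ.app Y) →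
    q ∈ Set.range (τ.app X))

/-- Restriction of coefficients along `τ`; `hcart` says that the naturality squares of `τ` are
pullbacks, which is what makes it natural. -/
noncomputable def freeComap : Q ⋙ ModuleCat.free R ⟶ P ⋙ ModuleCat.free R where
  app X := ModuleCat.ofHom (Finsupp.lcomapDomain (τ.app X) (hinj X))
  naturality X Y f := by
    refine ModuleCat.hom_ext (Finsupp.lhom_ext fun q c => ?_)
    change Finsupp.lcomapDomain (R := R) _ (hinj Y)
        (Finsupp.lmapDomain R R (Q.map f) (Finsupp.single q c)) =
      Finsupp.lmapDomain R R (P.map f)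
        (Finsupp.lcomapDomain (R := R) _ (hinj X) (Finsupp.single q c))
    rw [Finsupp.lmapDomain_apply, Finsupp.mapDomain_single]
    by_cases hq : q ∈ Set.range (τ.app X)
    · obtain ⟨p, rfl⟩ := hq
      rw [← NatTrans.naturality_apply, Finsupp.lcomapDomain_single, Finsupp.lcomapDomain_single,
        Finsupp.lmapDomain_apply, Finsupp.mapDomain_single]
    · rw [Finsupp.lcomapDomain_single_of_notMem_range _ (mt (hcart f q) hq),
        Finsupp.lcomapDomain_single_of_notMem_range _ hq, map_zero]

lemma whiskerRight_free_comp_freeComap :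
    Functor.whiskerRight τ (ModuleCat.free R) ≫ freeComap τ hinj hcart = 𝟙 _ := by
  ext X : 2
  refine ModuleCat.hom_ext (Finsupp.lhom_ext fun p c => ?_)
  change Finsupp.lcomapDomain (R := R) _ (hinj X)
    (Finsupp.lmapDomain R R (τ.app X) (Finsupp.single p c)) = Finsupp.single p c
  rw [Finsupp.lmapDomain_apply, Finsupp.mapDomain_single, Finsupp.lcomapDomain_single]

lemma whiskerRight_free_comp_freeComap_eq_zero {P'' : C ⥤ Type u} (σ : P'' ⟶ Q)
    (hdisj : ∀ X a b, σ.app X a ≠ τ.app X b) :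
    Functor.whiskerRight σ (ModuleCat.free R) ≫ freeComap τ hinj hcart = 0 := by
  ext X : 2
  refine ModuleCat.hom_ext (Finsupp.lhom_ext fun p c => ?_)
  change Finsupp.lcomapDomain (R := R) _ (hinj X)
    (Finsupp.lmapDomain R R (σ.app X) (Finsupp.single p c)) = 0
  rw [Finsupp.lmapDomain_apply, Finsupp.mapDomain_single,
    Finsupp.lcomapDomain_single_of_notMem_range _ fun ⟨b, hb⟩ => hdisj X p b hb.symm]

end FreeComap

section Decomposition

variable {ι : Type} {τ : P ⟶ Q} {υ : ι → (P' ⟶ Q)}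

lemma mem_range_app_left_of_map_mem
    (h : ∀ X, Function.Bijective
      (Sum.elim (τ.app X) fun p : ι × P'.obj X => (υ p.1).app X p.2))
    ⦃X Y : C⦄ (f : X ⟶ Y) (q : Q.obj X) (hq : Q.map f q ∈ Set.range (τ.app Y)) :
    q ∈ Set.range (τ.app X) := by
  obtain ⟨x | ⟨r, a⟩, rfl⟩ := (h X).2 q
  · exact ⟨x, rfl⟩
  · obtain ⟨b, hb⟩ := hq
    change _ = Q.map f ((υ r).app X a) at hb
    rw [← NatTrans.naturality_apply] at hb
    exact ((h Y).sumElim_right_ne_left r _ b hb.symm).elim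

lemma mem_range_app_right_of_map_mem
    (h : ∀ X, Function.Bijective
      (Sum.elim (τ.app X) fun p : ι × P'.obj X => (υ p.1).app X p.2))
    (r : ι) ⦃X Y : C⦄ (f : X ⟶ Y) (q : Q.obj X) (hq : Q.map f q ∈ Set.range ((υ r).app Y)) :
    q ∈ Set.range ((υ r).app X) := by
  obtain ⟨b, hb⟩ := hq
  obtain ⟨x | ⟨r', a⟩, rfl⟩ := (h X).2 q
  · change _ = Q.map f (τ.app X x) at hb
    rw [← NatTrans.naturality_apply] at hb
    exact ((h Y).sumElim_right_ne_left r b _ hb).elim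
  · change _ = Q.map f ((υ r').app X a) at hb
    rw [← NatTrans.naturality_apply] at hb
    obtain rfl : r' = r := by_contra fun hr => (h Y).sumElim_right_ne_right hr _ _ hb.symm
    exact ⟨a, rfl⟩

noncomputable def freeCompIsoBiprodOfBijective [Fintype ι] [DecidableEq ι]
    [HasFiniteBiproducts (C ⥤ ModuleCat.{u} R)] [HasBinaryBiproducts (C ⥤ ModuleCat.{u} R)]
    (h : ∀ X, Function.Bijective
      (Sum.elim (τ.app X) fun p : ι × P'.obj X => (υ p.1).app X p.2)) :
    Q ⋙ ModuleCat.free R ≅ (P ⋙ ModuleCat.free R) ⊞ ⨁ fun _ : ι => P' ⋙ ModuleCat.free R :=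
  Limits.biprodBiproductIsoOfTotal
    (freeComap τ (fun X => (h X).sumElim_injective_left) (mem_range_app_left_of_map_mem h))
    (Functor.whiskerRight τ (ModuleCat.free R))
    (fun r => freeComap (υ r) (fun X => (h X).sumElim_injective_right r)
      (mem_range_app_right_of_map_mem h r))
    (fun r => Functor.whiskerRight (υ r) (ModuleCat.free R))
    (whiskerRight_free_comp_freeComap _ _ _)
    (fun r => whiskerRight_free_comp_freeComap_eq_zero _ _ _ _
      fun X a b => ((h X).sumElim_right_ne_left r b a).symm)
    (fun r => whiskerRight_free_comp_freeComap_eq_zero _ _ _ _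
      fun X a b => (h X).sumElim_right_ne_left r a b)
    (fun r r' => by
      split_ifs with hr
      · subst hr; exact whiskerRight_free_comp_freeComap _ _ _
      · exact whiskerRight_free_comp_freeComap_eq_zero _ _ _ _
          fun X a b => (h X).sumElim_right_ne_right hr a b)
    (by
      ext X : 2
      simp only [NatTrans.app_add, NatTrans.app_sum, NatTrans.comp_app, NatTrans.id_app]
      refine ModuleCat.hom_ext ?_
      simp only [ModuleCat.hom_add, ModuleCat.hom_sum, ModuleCat.hom_comp, ModuleCat.hom_id]
      exact Finsupp.lmapDomain_comp_lcomapDomain_add_sum (h X))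

end Decomposition

end CategoryTheory

/-- `FI(i, -)`. By definition `Mrep k i` is `embFunctor i ⋙ ModuleCat.free k` and
`(shiftF k).obj (Mrep k i)` is `(iota ⋙ embFunctor i) ⋙ ModuleCat.free k`. -/
def embFunctor (i : ℕ) : FI ⥤ Type where
  obj n := Fin i ↪ Fin n.n
  map f := TypeCat.ofHom fun e => e.trans f

def succEmbNatTrans (i : ℕ) : embFunctor i ⟶ iota ⋙ embFunctor i where
  app n := TypeCat.ofHom fun e => e.trans (Fin.succEmb n.n)
  naturality m n f := ConcreteCategory.hom_ext _ _ fun (e : Fin i ↪ Fin m.n) =>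
    DFunLike.ext (F := Fin i ↪ Fin (n.n + 1)) _ _ fun x => (extEmb_succ f (e x)).symm

def insertZero {j n : ℕ} (r : Fin (j + 1)) (d : Fin j ↪ Fin n) : Fin (j + 1) ↪ Fin (n + 1) :=
  (finSuccEquiv' r).toEmbedding.trans (d.optionMap.trans (finSuccEquiv n).symm.toEmbedding)

@[simp] lemma insertZero_self {j n : ℕ} (r : Fin (j + 1)) (d : Fin j ↪ Fin n) :
    insertZero r d r = 0 := by
  simp [insertZero, Function.Embedding.optionMap, Function.Embedding.trans]

@[simp] lemma insertZero_succAbove {j n : ℕ} (r : Fin (j + 1)) (d : Fin j ↪ Fin n) (y : Fin j) :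
    insertZero r d (r.succAbove y) = (d y).succ := by
  simp [insertZero, Function.Embedding.optionMap, Function.Embedding.trans]

lemma insertZero_eq_zero_iff {j n : ℕ} (r : Fin (j + 1)) (d : Fin j ↪ Fin n) (x : Fin (j + 1)) :
    insertZero r d x = 0 ↔ x = r := by
  refine Fin.succAboveCases r ?_ (fun y => ?_) x
  · simp
  · simp [Fin.succ_ne_zero, Fin.succAbove_ne r y]

def insertZeroNatTrans (j : ℕ) (r : Fin (j + 1)) : embFunctor j ⟶ iota ⋙ embFunctor (j + 1) where
  app n := TypeCat.ofHom (insertZero r)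
  naturality m n f := ConcreteCategory.hom_ext _ _ fun (d : Fin j ↪ Fin m.n) => by
    change insertZero r (d.trans f) = (insertZero r d).trans (extEmb f)
    exact DFunLike.ext _ _ fun x => Fin.succAboveCases r (by simp) (fun y => by simp) x

lemma insertZero_injective (j n : ℕ) :
    Function.Injective fun p : Fin (j + 1) × (Fin j ↪ Fin n) => insertZero p.1 p.2 := by
  rintro ⟨r, d⟩ ⟨r', d'⟩ h
  obtain rfl : r = r' :=
    (insertZero_eq_zero_iff r' d' r).1
      ((DFunLike.congr_fun h r).symm.trans (insertZero_self r d))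
  refine Prod.ext rfl (DFunLike.ext _ _ fun y => Fin.succ_injective _ ?_)
  simpa using DFunLike.congr_fun h (r.succAbove y)

lemma trans_succEmb_ne_insertZero {j n : ℕ} (e : Fin (j + 1) ↪ Fin n) (r : Fin (j + 1))
    (d : Fin j ↪ Fin n) : e.trans (Fin.succEmb n) ≠ insertZero r d := fun h =>
  Fin.succ_ne_zero _ ((DFunLike.congr_fun h r).trans (insertZero_self r d))

lemma bijective_sumElim_succEmb_insertZero (j n : ℕ) :
    Function.Bijective (Sum.elim (fun e : Fin (j + 1) ↪ Fin n => e.trans (Fin.succEmb n))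
      fun p : Fin (j + 1) × (Fin j ↪ Fin n) => insertZero p.1 p.2) := by
  -- both sides have `(n + 1)^{(j + 1)} = n^{(j + 1)} + (j + 1) n^{(j)}` elements (falling powers)
  refine (Fintype.bijective_iff_injective_and_card _).2 ⟨?_, ?_⟩
  · refine Function.Injective.sumElim (fun e e' h => ?_) (insertZero_injective j n)
      fun e p => trans_succEmb_ne_insertZero e p.1 p.2
    exact DFunLike.ext _ _ fun x => Fin.succ_injective _ (DFunLike.congr_fun h x)
  · simp only [Fintype.card_sum, Fintype.card_prod, Fintype.card_embedding_eq, Fintype.card_fin]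
    rw [Nat.succ_descFactorial_succ, Nat.descFactorial_succ, ← add_mul]
    rcases le_or_gt j n with hjn | hjn
    · congr 1
      omega
    · simp [Nat.descFactorial_eq_zero_iff_lt.2 hjn]

lemma bijective_trans_succEmb_zero (n : ℕ) :
    Function.Bijective fun e : Fin 0 ↪ Fin n => e.trans (Fin.succEmb n) :=
  ⟨fun _ _ _ => Subsingleton.elim _ _, fun _ => ⟨default, Subsingleton.elim _ _⟩⟩

/-- `Σ M(i) ≅ M(i) ⊕ M(i-1)^{⊕ i}`. -/
theorem stmt_3 (k : Type) [CommRing k] (i : ℕ) :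
    Nonempty ((shiftF k).obj (Mrep k i) ≅
      (Mrep k i) ⊞ (⨁ fun _ : Fin i => Mrep k (i - 1))) := by
  cases i with
  | zero =>
    exact ⟨freeCompIsoBiprodOfBijective (τ := succEmbNatTrans 0) (P' := embFunctor 0)
      (υ := Fin.elim0) fun n => (bijective_trans_succEmb_zero n.n).sumElim_of_isEmpty _⟩
  | succ j =>
    exact ⟨freeCompIsoBiprodOfBijective (τ := succEmbNatTrans (j + 1))
      (υ := insertZeroNatTrans j) fun n => bijective_sumElim_succEmb_insertZero j n.n⟩
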